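/- Under the structured RIP hypothesis (with blocks as above), for any two disjoint block-index sets Ω₁, Ω₂ with |Ω₁|+|Ω₂| ≤ P, RIP constants δ_{|Ω₁|}, δ_{|Ω₂|}, δ_{|Ω₁|+|Ω₂|} all < 1, and any matrix D supported on Ω₂: (1 − δ_{|Ω₁|+|Ω₂|}/√((1−δ_{|Ω₁|})(1−δ_{|Ω₂|}))) · ‖Ψ_{Ω₂}D_{Ω₂}‖_F ≤ ‖(I − Ψ_{Ω₁}Ψ_{Ω₁}^†) Ψ_{Ω₂}D_{Ω₂}‖_F ≤ ‖Ψ_{Ω₂}D_{Ω₂}‖_F, where Ψ_{Ω₁}^† = (Ψ_{Ω₁}ᴴΨ_{Ω₁})^{-1}Ψ_{Ω₁}ᴴ is the Moore–Penrose pseudoinverse (Ψ_{Ω₁} having full column rank). -/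

import Mathlib

open scoped BigOperators
open Matrix
noncomputable section

variable {Np M L R : ℕ}

/-- Frobenius norm of a complex matrix. -/
def frob {m n : Type*} [Fintype m] [Fintype n] (A : Matrix m n ℂ) : ℝ :=
  Real.sqrt (∑ i, ∑ j, ‖A i j‖ ^ 2)

/-- `D` is block-supported on the block-index set `Ω`. -/
def SuppOn (Ω : Finset (Fin L)) (D : Matrix (Fin L × Fin M) (Fin R) ℂ) : Prop :=
  ∀ p r, p.1 ∉ Ω → D p r = 0

/-- Column-block submatrix `Ψ_Ω` of `Ψ`. -/
def bsub (Ψ : Matrix (Fin Np) (Fin L × Fin M) ℂ) (Ω : Finset (Fin L)) :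
    Matrix (Fin Np) ({l // l ∈ Ω} × Fin M) ℂ :=
  Ψ.submatrix id (fun q => ((q.1 : Fin L), q.2))

/-- Row-block submatrix `D_Ω` of `D`. -/
def rsub (D : Matrix (Fin L × Fin M) (Fin R) ℂ) (Ω : Finset (Fin L)) :
    Matrix ({l // l ∈ Ω} × Fin M) (Fin R) ℂ :=
  D.submatrix (fun q => ((q.1 : Fin L), q.2)) id

/-- Moore–Penrose pseudoinverse `Ψ_Ω^† = (Ψ_Ωᴴ Ψ_Ω)⁻¹ Ψ_Ωᴴ` of the column-block submatrix. -/
def bpinv (Ψ : Matrix (Fin Np) (Fin L × Fin M) ℂ) (Ω : Finset (Fin L)) :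
    Matrix ({l // l ∈ Ω} × Fin M) (Fin Np) ℂ :=
  ((bsub Ψ Ω)ᴴ * bsub Ψ Ω)⁻¹ * (bsub Ψ Ω)ᴴ

/-- Re-embed a matrix indexed by the blocks of `Ω` as a full `ML × R` matrix, zero outside `Ω`. -/
def expand (Ω : Finset (Fin L)) (X : Matrix ({l // l ∈ Ω} × Fin M) (Fin R) ℂ) :
    Matrix (Fin L × Fin M) (Fin R) ℂ :=
  fun p r => if h : p.1 ∈ Ω then X (⟨p.1, h⟩, p.2) r else 0

/-- Structured (block) RIP of order `P` with constant `δ`. -/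
def SRIP (Ψ : Matrix (Fin Np) (Fin L × Fin M) ℂ) (P : ℕ) (δ : ℝ) : Prop :=
  ∀ Ω : Finset (Fin L), Ω.card ≤ P →
    ∀ D : Matrix (Fin L × Fin M) (Fin R) ℂ, SuppOn Ω D →
      (1 - δ) * frob D ^ 2 ≤ frob (Ψ * D) ^ 2 ∧ frob (Ψ * D) ^ 2 ≤ (1 + δ) * frob D ^ 2

/-!
Write `B = Ψ_{Ω₂} D_{Ω₂} = Ψ D` and `Π = Ψ_{Ω₁} Ψ_{Ω₁}^†`, the orthogonal projection onto the
column span of `Ψ_{Ω₁}` for the Frobenius inner product. The upper bound is Pythagoras for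
`B = Π B + (1 - Π) B`. For the lower bound, `‖B‖ ≤ ‖Π B‖ + ‖(1 - Π) B‖`, so it suffices that
`√((1 - δ₁)(1 - δ₂)) ‖Π B‖ ≤ δ₁₂ ‖B‖`. With `Π B = Ψ_{Ω₁} X`, Cauchy–Schwarz in
`‖Π B‖² = re ⟪X, Ψ_{Ω₁}ᴴ B⟫` and the RIP lower bound `√(1 - δ₁) ‖X‖ ≤ ‖Ψ_{Ω₁} X‖` give
`√(1 - δ₁) ‖Π B‖ ≤ ‖Ψ_{Ω₁}ᴴ B‖`; polarizing the RIP on `Ω₁ ∪ Ω₂` gives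
`‖Ψ_{Ω₁}ᴴ B‖ ≤ δ₁₂ ‖D‖`, and the RIP on `Ω₂` gives `√(1 - δ₂) ‖D‖ ≤ ‖B‖`.

Matrices are compared through the isometry `frobEquiv` onto `EuclideanSpace ℂ (m × n)`, so that
the inner-product-space library applies to the Frobenius norm.
-/

open scoped InnerProductSpace

section Frobenius

variable {m n k : Type*}

def frobEquiv : Matrix m n ℂ ≃ₗ[ℂ] EuclideanSpace ℂ (m × n) :=
  (LinearEquiv.curry ℂ ℂ m n).symm.trans (WithLp.linearEquiv 2 ℂ (m × n → ℂ)).symm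

@[simp]
lemma frobEquiv_apply (A : Matrix m n ℂ) (p : m × n) : frobEquiv A p = A p.1 p.2 := rfl

variable [Fintype m] [Fintype n] [Fintype k]

lemma frob_eq_norm (A : Matrix m n ℂ) : frob A = ‖frobEquiv A‖ := by
  rw [EuclideanSpace.norm_eq, frob, ← Fintype.sum_prod_type']
  rfl

lemma frob_nonneg (A : Matrix m n ℂ) : 0 ≤ frob A := Real.sqrt_nonneg _

@[simp]
lemma frob_zero : frob (0 : Matrix m n ℂ) = 0 := by simp [frob]

lemma frob_pos {A : Matrix m n ℂ} (hA : A ≠ 0) : 0 < frob A := by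
  rw [frob_eq_norm]
  exact norm_pos_iff.mpr ((LinearEquiv.map_ne_zero_iff _).mpr hA)

lemma frob_smul (c : ℂ) (A : Matrix m n ℂ) : frob (c • A) = ‖c‖ * frob A := by
  rw [frob_eq_norm, map_smul, norm_smul, ← frob_eq_norm]

lemma frob_inv_smul_self {A : Matrix m n ℂ} (hA : A ≠ 0) :
    frob ((((frob A)⁻¹ : ℝ) : ℂ) • A) = 1 := by
  rw [frob_smul, Complex.norm_real, Real.norm_eq_abs, abs_of_pos (inv_pos.mpr (frob_pos hA)),
    inv_mul_cancel₀ (frob_pos hA).ne']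

lemma frob_add_le (A B : Matrix m n ℂ) : frob (A + B) ≤ frob A + frob B := by
  simpa only [frob_eq_norm, map_add] using norm_add_le _ _

lemma frob_add_sq (A B : Matrix m n ℂ) :
    frob (A + B) ^ 2 = frob A ^ 2 + 2 * RCLike.re ⟪frobEquiv A, frobEquiv B⟫_ℂ + frob B ^ 2 := by
  simp only [frob_eq_norm, map_add]
  exact norm_add_sq (𝕜 := ℂ) _ _

lemma frob_sub_sq (A B : Matrix m n ℂ) :
    frob (A - B) ^ 2 = frob A ^ 2 - 2 * RCLike.re ⟪frobEquiv A, frobEquiv B⟫_ℂ + frob B ^ 2 := by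
  simp only [frob_eq_norm, map_sub]
  exact norm_sub_sq (𝕜 := ℂ) _ _

lemma inner_frobEquiv (A B : Matrix m n ℂ) :
    ⟪frobEquiv A, frobEquiv B⟫_ℂ = (Aᴴ * B).trace := by
  simp only [EuclideanSpace.inner_eq_star_dotProduct, dotProduct, Fintype.sum_prod_type,
    Matrix.trace, Matrix.diag, Matrix.mul_apply, Matrix.conjTranspose_apply]
  rw [Finset.sum_comm]
  simp [mul_comm]

lemma inner_frobEquiv_mul_left (Q : Matrix k m ℂ) (X : Matrix m n ℂ) (C : Matrix k n ℂ) :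
    ⟪frobEquiv (Q * X), frobEquiv C⟫_ℂ = ⟪frobEquiv X, frobEquiv (Qᴴ * C)⟫_ℂ := by
  rw [inner_frobEquiv, inner_frobEquiv, Matrix.conjTranspose_mul, Matrix.mul_assoc]

end Frobenius

section Projection

variable {m n k : Type*} [Fintype m] [Fintype k] [DecidableEq m] {Q : Matrix k m ℂ}

def colProj (Q : Matrix k m ℂ) : Matrix k k ℂ :=
  Q * ((Qᴴ * Q)⁻¹ * Qᴴ)

lemma colProj_mul (B : Matrix k n ℂ) : colProj Q * B = Q * ((Qᴴ * Q)⁻¹ * (Qᴴ * B)) := by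
  simp only [colProj, Matrix.mul_assoc]

variable [DecidableEq k]

lemma conjTranspose_mul_one_sub_colProj (hQ : IsUnit (Qᴴ * Q)) :
    Qᴴ * (1 - colProj Q) = 0 := by
  rw [colProj, Matrix.mul_sub, Matrix.mul_one, ← Matrix.mul_assoc, ← Matrix.mul_assoc,
    Matrix.mul_nonsing_inv _ ((Matrix.isUnit_iff_isUnit_det _).mp hQ), Matrix.one_mul, sub_self]

lemma colProj_mul_add_one_sub_colProj_mul (B : Matrix k n ℂ) :
    colProj Q * B + (1 - colProj Q) * B = B := by
  rw [← Matrix.add_mul, add_sub_cancel, Matrix.one_mul]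

variable [Fintype n]

lemma inner_mul_one_sub_colProj_mul (hQ : IsUnit (Qᴴ * Q)) (X : Matrix m n ℂ)
    (B : Matrix k n ℂ) : ⟪frobEquiv (Q * X), frobEquiv ((1 - colProj Q) * B)⟫_ℂ = 0 := by
  rw [inner_frobEquiv_mul_left, ← Matrix.mul_assoc, conjTranspose_mul_one_sub_colProj hQ,
    Matrix.zero_mul, map_zero, inner_zero_right]

lemma frob_one_sub_colProj_mul_le (hQ : IsUnit (Qᴴ * Q)) (B : Matrix k n ℂ) :
    frob ((1 - colProj Q) * B) ≤ frob B := by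
  have horth : ⟪frobEquiv (colProj Q * B), frobEquiv ((1 - colProj Q) * B)⟫_ℂ = 0 := by
    rw [colProj_mul]; exact inner_mul_one_sub_colProj_mul hQ _ _
  have hpyth := frob_add_sq (colProj Q * B) ((1 - colProj Q) * B)
  rw [colProj_mul_add_one_sub_colProj_mul, horth, map_zero, mul_zero, add_zero] at hpyth
  refine (pow_le_pow_iff_left₀ (frob_nonneg _) (frob_nonneg _) two_ne_zero).mp ?_
  nlinarith [sq_nonneg (frob (colProj Q * B))]

lemma frob_le_frob_colProj_mul_add (B : Matrix k n ℂ) :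
    frob B ≤ frob (colProj Q * B) + frob ((1 - colProj Q) * B) := by
  calc frob B = frob (colProj Q * B + (1 - colProj Q) * B) := by
        rw [colProj_mul_add_one_sub_colProj_mul]
    _ ≤ _ := frob_add_le _ _

lemma mul_frob_colProj_mul_le (hQ : IsUnit (Qᴴ * Q)) {g : ℝ} (hg : 0 ≤ g)
    (hlow : ∀ X : Matrix m n ℂ, g * frob X ≤ frob (Q * X)) (B : Matrix k n ℂ) :
    g * frob (colProj Q * B) ≤ frob (Qᴴ * B) := by
  set X := (Qᴴ * Q)⁻¹ * (Qᴴ * B)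
  have hPB : colProj Q * B = Q * X := colProj_mul B
  have hsq : frob (Q * X) ^ 2 ≤ frob X * frob (Qᴴ * B) :=
    calc frob (Q * X) ^ 2 = RCLike.re ⟪frobEquiv (Q * X), frobEquiv (Q * X)⟫_ℂ := by
          rw [frob_eq_norm, inner_self_eq_norm_sq (𝕜 := ℂ)]
      _ = RCLike.re ⟪frobEquiv (Q * X), frobEquiv B⟫_ℂ := by
          conv_rhs => rw [← colProj_mul_add_one_sub_colProj_mul (Q := Q) B, map_add, inner_add_right,
            inner_mul_one_sub_colProj_mul hQ, add_zero, hPB]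
      _ = RCLike.re ⟪frobEquiv X, frobEquiv (Qᴴ * B)⟫_ℂ := by rw [inner_frobEquiv_mul_left]
      _ ≤ ‖⟪frobEquiv X, frobEquiv (Qᴴ * B)⟫_ℂ‖ := RCLike.re_le_norm _
      _ ≤ frob X * frob (Qᴴ * B) := by
          rw [frob_eq_norm, frob_eq_norm]; exact norm_inner_le_norm _ _
  rw [hPB]
  rcases (frob_nonneg (Q * X)).eq_or_lt with h0 | hpos
  · rw [← h0, mul_zero]; exact frob_nonneg _
  refine le_of_mul_le_mul_right ?_ hpos
  calc g * frob (Q * X) * frob (Q * X) = g * frob (Q * X) ^ 2 := by ring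
    _ ≤ g * (frob X * frob (Qᴴ * B)) := mul_le_mul_of_nonneg_left hsq hg
    _ = g * frob X * frob (Qᴴ * B) := by ring
    _ ≤ frob (Q * X) * frob (Qᴴ * B) := mul_le_mul_of_nonneg_right (hlow X) (frob_nonneg _)
    _ = frob (Qᴴ * B) * frob (Q * X) := mul_comm _ _

end Projection

section Blocks

variable {Ω Ω' Ω₁ Ω₂ : Finset (Fin L)} {D E : Matrix (Fin L × Fin M) (Fin R) ℂ}

lemma SuppOn.mono (hD : SuppOn Ω D) (h : Ω ⊆ Ω') : SuppOn Ω' D :=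
  fun p r hp => hD p r fun hpΩ => hp (h hpΩ)

lemma SuppOn.add (hD : SuppOn Ω D) (hE : SuppOn Ω E) : SuppOn Ω (D + E) :=
  fun p r hp => by simp [hD p r hp, hE p r hp]

lemma SuppOn.sub (hD : SuppOn Ω D) (hE : SuppOn Ω E) : SuppOn Ω (D - E) :=
  fun p r hp => by simp [hD p r hp, hE p r hp]

lemma SuppOn.smul (hD : SuppOn Ω D) (c : ℂ) : SuppOn Ω (c • D) :=
  fun p r hp => by simp [hD p r hp]

lemma suppOn_expand (X : Matrix ({l // l ∈ Ω} × Fin M) (Fin R) ℂ) : SuppOn Ω (expand Ω X) :=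
  fun _ _ hp => dif_neg hp

lemma inner_frobEquiv_eq_zero_of_disjoint (hdisj : Disjoint Ω₁ Ω₂) (hD : SuppOn Ω₁ D)
    (hE : SuppOn Ω₂ E) : ⟪frobEquiv D, frobEquiv E⟫_ℂ = 0 := by
  refine (PiLp.inner_apply _ _).trans (Finset.sum_eq_zero fun p _ => ?_)
  by_cases hp : p.1.1 ∈ Ω₁
  · simp [hE p.1 p.2 (Finset.disjoint_left.mp hdisj hp)]
  · simp [hD p.1 p.2 hp]

lemma sum_blocks_eq_sum {β : Type*} [AddCommMonoid β] (g : Fin L × Fin M → β)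
    (hg : ∀ p, p.1 ∉ Ω → g p = 0) :
    ∑ q : {l // l ∈ Ω} × Fin M, g (q.1, q.2) = ∑ p, g p :=
  Fintype.sum_of_injective _ (Subtype.val_injective.prodMap Function.injective_id) _ _
    (fun p hp => hg p fun h => hp ⟨(⟨p.1, h⟩, p.2), rfl⟩) fun _ => rfl

lemma bsub_mul_rsub (Ψ : Matrix (Fin Np) (Fin L × Fin M) ℂ) (hD : SuppOn Ω D) :
    bsub Ψ Ω * rsub D Ω = Ψ * D := by
  ext i r
  exact sum_blocks_eq_sum (fun p => Ψ i p * D p r) fun p hp => by simp [hD p r hp]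

lemma frob_rsub (hD : SuppOn Ω D) : frob (rsub D Ω) = frob D :=
  congrArg Real.sqrt <| sum_blocks_eq_sum (fun p => ∑ r, ‖D p r‖ ^ 2) fun p hp => by
    simp [hD p _ hp]

lemma bsub_mul_bpinv (Ψ : Matrix (Fin Np) (Fin L × Fin M) ℂ) :
    bsub Ψ Ω * bpinv Ψ Ω = colProj (bsub Ψ Ω) :=
  rfl

lemma rsub_expand (X : Matrix ({l // l ∈ Ω} × Fin M) (Fin R) ℂ) : rsub (expand Ω X) Ω = X := by
  ext q r
  exact dif_pos q.1.2

lemma frob_expand (X : Matrix ({l // l ∈ Ω} × Fin M) (Fin R) ℂ) : frob (expand Ω X) = frob X := by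
  rw [← frob_rsub (suppOn_expand X), rsub_expand]

lemma mul_expand (Ψ : Matrix (Fin Np) (Fin L × Fin M) ℂ)
    (X : Matrix ({l // l ∈ Ω} × Fin M) (Fin R) ℂ) : Ψ * expand Ω X = bsub Ψ Ω * X := by
  rw [← bsub_mul_rsub Ψ (suppOn_expand X), rsub_expand]

end Blocks

namespace SRIP

variable {Ψ : Matrix (Fin Np) (Fin L × Fin M) ℂ} {k : ℕ} {δ : ℝ}
  {Ω Ω₁ Ω₂ : Finset (Fin L)} {D u v : Matrix (Fin L × Fin M) (Fin R) ℂ}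

lemma nonneg (h : SRIP (R := R) Ψ k δ) (hΩ : Ω.card ≤ k) (hD : SuppOn Ω D) (hD0 : D ≠ 0) :
    0 ≤ δ := by
  obtain ⟨hlo, hup⟩ := h Ω hΩ D hD
  nlinarith [pow_pos (frob_pos hD0) 2]

lemma sqrt_mul_frob_le (h : SRIP (R := R) Ψ k δ) (hΩ : Ω.card ≤ k) (hD : SuppOn Ω D) :
    √(1 - δ) * frob D ≤ frob (Ψ * D) := by
  rw [← Real.sqrt_sq (frob_nonneg D), ← Real.sqrt_mul' _ (sq_nonneg _),
    ← Real.sqrt_sq (frob_nonneg (Ψ * D))]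
  exact Real.sqrt_le_sqrt (h Ω hΩ D hD).1

lemma sqrt_mul_frob_le_frob_bsub_mul (h : SRIP (R := R) Ψ k δ) (hΩ : Ω.card ≤ k)
    (X : Matrix ({l // l ∈ Ω} × Fin M) (Fin R) ℂ) : √(1 - δ) * frob X ≤ frob (bsub Ψ Ω * X) := by
  simpa only [frob_expand, mul_expand] using h.sqrt_mul_frob_le hΩ (suppOn_expand X)

/-- Polarization: `4 re ⟪Ψu, Ψv⟫ = ‖Ψ(u + v)‖² - ‖Ψ(u - v)‖²`, and `‖u ± v‖² = 2`. -/
lemma re_inner_mul_le_of_frob_eq_one (h : SRIP (R := R) Ψ k δ) (hdisj : Disjoint Ω₁ Ω₂)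
    (hk : (Ω₁ ∪ Ω₂).card ≤ k) (hu : SuppOn Ω₁ u) (hv : SuppOn Ω₂ v) (hu1 : frob u = 1)
    (hv1 : frob v = 1) : RCLike.re ⟪frobEquiv (Ψ * u), frobEquiv (Ψ * v)⟫_ℂ ≤ δ := by
  have huv := inner_frobEquiv_eq_zero_of_disjoint hdisj hu hv
  have hu' := hu.mono (Finset.subset_union_left (s₂ := Ω₂))
  have hv' := hv.mono (Finset.subset_union_right (s₁ := Ω₁))
  have hup := (h _ hk (u + v) (hu'.add hv')).2
  have hlo := (h _ hk (u - v) (hu'.sub hv')).1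
  rw [Matrix.mul_add, frob_add_sq, frob_add_sq, huv] at hup
  rw [Matrix.mul_sub, frob_sub_sq, frob_sub_sq, huv] at hlo
  simp only [hu1, hv1, map_zero] at hup hlo
  linarith

lemma re_inner_mul_le (h : SRIP (R := R) Ψ k δ) (hdisj : Disjoint Ω₁ Ω₂)
    (hk : (Ω₁ ∪ Ω₂).card ≤ k) (hu : SuppOn Ω₁ u) (hv : SuppOn Ω₂ v) :
    RCLike.re ⟪frobEquiv (Ψ * u), frobEquiv (Ψ * v)⟫_ℂ ≤ δ * (frob u * frob v) := by
  rcases eq_or_ne u 0 with rfl | hu0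
  · simp
  rcases eq_or_ne v 0 with rfl | hv0
  · simp
  have key := h.re_inner_mul_le_of_frob_eq_one hdisj hk (hu.smul _) (hv.smul _)
    (frob_inv_smul_self hu0) (frob_inv_smul_self hv0)
  rw [Matrix.mul_smul, Matrix.mul_smul, map_smul, map_smul, inner_smul_left, inner_smul_right,
    Complex.conj_ofReal, ← mul_assoc, ← Complex.ofReal_mul] at key
  simp only [RCLike.re_to_complex, Complex.re_ofReal_mul] at key ⊢
  rwa [← mul_inv, inv_mul_le_iff₀ (mul_pos (frob_pos hu0) (frob_pos hv0)), mul_comm (frob u * frob v)] at key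

lemma frob_conjTranspose_bsub_mul_le (h : SRIP (R := R) Ψ k δ) (hδ : 0 ≤ δ)
    (hdisj : Disjoint Ω₁ Ω₂) (hk : (Ω₁ ∪ Ω₂).card ≤ k) (hD : SuppOn Ω₂ D) :
    frob ((bsub Ψ Ω₁)ᴴ * (Ψ * D)) ≤ δ * frob D := by
  set Y := (bsub Ψ Ω₁)ᴴ * (Ψ * D)
  have hY : frob Y * frob Y ≤ δ * frob D * frob Y :=
    calc frob Y * frob Y = RCLike.re ⟪frobEquiv Y, frobEquiv Y⟫_ℂ := by
          rw [inner_self_eq_norm_sq (𝕜 := ℂ), frob_eq_norm, sq]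
      _ = RCLike.re ⟪frobEquiv (Ψ * expand Ω₁ Y), frobEquiv (Ψ * D)⟫_ℂ := by
          rw [mul_expand, inner_frobEquiv_mul_left (bsub Ψ Ω₁) Y]
      _ ≤ δ * (frob (expand Ω₁ Y) * frob D) := h.re_inner_mul_le hdisj hk (suppOn_expand Y) hD
      _ = δ * frob D * frob Y := by rw [frob_expand]; ring
  rcases (frob_nonneg Y).eq_or_lt with h0 | hpos
  · rw [← h0]; exact mul_nonneg hδ (frob_nonneg D)
  · exact le_of_mul_le_mul_right hY hpos

end SRIP

theorem srip_projection_bounds_general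
    (Ψ : Matrix (Fin Np) (Fin L × Fin M) ℂ) (δ : ℕ → ℝ)
    (hRIP : ∀ k, SRIP (R := R) Ψ k (δ k))
    (Ω₁ Ω₂ : Finset (Fin L)) (hdisj : Disjoint Ω₁ Ω₂)
    (hδ1 : δ Ω₁.card < 1) (hδ2 : δ Ω₂.card < 1)
    (hfull : IsUnit ((bsub Ψ Ω₁)ᴴ * bsub Ψ Ω₁))
    (D : Matrix (Fin L × Fin M) (Fin R) ℂ) (hD : SuppOn Ω₂ D) :
    (1 - δ (Ω₁.card + Ω₂.card) /
        Real.sqrt ((1 - δ Ω₁.card) * (1 - δ Ω₂.card))) *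
        frob (bsub Ψ Ω₂ * rsub D Ω₂) ≤
      frob ((1 - bsub Ψ Ω₁ * bpinv Ψ Ω₁) * (bsub Ψ Ω₂ * rsub D Ω₂)) ∧
    frob ((1 - bsub Ψ Ω₁ * bpinv Ψ Ω₁) * (bsub Ψ Ω₂ * rsub D Ω₂)) ≤
      frob (bsub Ψ Ω₂ * rsub D Ω₂) := by
  rw [bsub_mul_bpinv, bsub_mul_rsub Ψ hD]
  refine ⟨?_, frob_one_sub_colProj_mul_le hfull _⟩
  rcases eq_or_ne D 0 with rfl | hD0
  · simp
  have hk : (Ω₁ ∪ Ω₂).card ≤ Ω₁.card + Ω₂.card := Finset.card_union_le _ _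
  have hδ12 : 0 ≤ δ (Ω₁.card + Ω₂.card) :=
    (hRIP _).nonneg hk (hD.mono Finset.subset_union_right) hD0
  have hproj : √(1 - δ Ω₁.card) * frob (colProj (bsub Ψ Ω₁) * (Ψ * D)) ≤
      frob ((bsub Ψ Ω₁)ᴴ * (Ψ * D)) :=
    mul_frob_colProj_mul_le hfull (Real.sqrt_nonneg _)
      ((hRIP _).sqrt_mul_frob_le_frob_bsub_mul le_rfl) _
  have hcross := (hRIP _).frob_conjTranspose_bsub_mul_le hδ12 hdisj hk hD
  have hlow := (hRIP _).sqrt_mul_frob_le le_rfl hD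
  have htri := frob_le_frob_colProj_mul_add (Q := bsub Ψ Ω₁) (Ψ * D)
  have hg1 : 0 < √(1 - δ Ω₁.card) := Real.sqrt_pos.mpr (by linarith)
  have hg2 : 0 < √(1 - δ Ω₂.card) := Real.sqrt_pos.mpr (by linarith)
  have hbound : √(1 - δ Ω₁.card) * √(1 - δ Ω₂.card) * frob (colProj (bsub Ψ Ω₁) * (Ψ * D)) ≤
      δ (Ω₁.card + Ω₂.card) * frob (Ψ * D) := by
    nlinarith [mul_le_mul_of_nonneg_left hproj hg2.le, mul_le_mul_of_nonneg_left hcross hg2.le,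
      mul_le_mul_of_nonneg_left hlow hδ12]
  rw [Real.sqrt_mul (by linarith), one_sub_mul, sub_le_iff_le_add, div_mul_eq_mul_div]
  have := (le_div_iff₀' (mul_pos hg1 hg2)).mpr hbound
  linarith

/-- near-orthogonality of the residual projection,
`(1 − δ_{|Ω₁|+|Ω₂|}/√((1−δ_{|Ω₁|})(1−δ_{|Ω₂|}))) ‖Ψ_{Ω₂}D_{Ω₂}‖_F ≤
 ‖(I − Ψ_{Ω₁}Ψ_{Ω₁}^†)Ψ_{Ω₂}D_{Ω₂}‖_F ≤ ‖Ψ_{Ω₂}D_{Ω₂}‖_F`. -/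
theorem srip_projection_bounds
    (Ψ : Matrix (Fin Np) (Fin L × Fin M) ℂ) (P : ℕ) (δ : ℕ → ℝ)
    (hRIP : ∀ k, SRIP (R := R) Ψ k (δ k))
    (Ω₁ Ω₂ : Finset (Fin L)) (hdisj : Disjoint Ω₁ Ω₂)
    (hcard : Ω₁.card + Ω₂.card ≤ P)
    (hδ1 : δ Ω₁.card < 1) (hδ2 : δ Ω₂.card < 1)
    (hδ12 : δ (Ω₁.card + Ω₂.card) < 1)
    (hfull : IsUnit ((bsub Ψ Ω₁)ᴴ * bsub Ψ Ω₁))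
    (D : Matrix (Fin L × Fin M) (Fin R) ℂ) (hD : SuppOn Ω₂ D) :
    (1 - δ (Ω₁.card + Ω₂.card) /
        Real.sqrt ((1 - δ Ω₁.card) * (1 - δ Ω₂.card))) *
        frob (bsub Ψ Ω₂ * rsub D Ω₂) ≤
      frob ((1 - bsub Ψ Ω₁ * bpinv Ψ Ω₁) * (bsub Ψ Ω₂ * rsub D Ω₂)) ∧
    frob ((1 - bsub Ψ Ω₁ * bpinv Ψ Ω₁) * (bsub Ψ Ω₂ * rsub D Ω₂)) ≤
      frob (bsub Ψ Ω₂ * rsub D Ω₂) :=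
  srip_projection_bounds_general Ψ δ hRIP Ω₁ Ω₂ hdisj hδ1 hδ2 hfull D hD
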